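/- arXiv:2209.12631 — 3 statements merged into one kernel-verified Lean document; each statement's English description precedes it below -/
import Mathlib

section
/- The cycle graphs C_4 and C_6 satisfy mob(C_4) = 2 and mob(C_6) = 2. -/
/-- `S` is a general position set of `G`: no three distinct vertices of `S`
lie on a common shortest path. -/
def IsGPSet {V : Type*} (G : SimpleGraph V) (S : Finset V) : Prop :=
  ∀ x ∈ S, ∀ y ∈ S, ∀ z ∈ S, x ≠ y → y ≠ z → x ≠ z →
    G.dist x y + G.dist y z ≠ G.dist x z

/-- A legal move: one robot moves from an occupied vertex `u` to an adjacent
unoccupied vertex `v` so that the new set of occupied vertices is again in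
general position. -/
def LegalMove {V : Type*} [DecidableEq V] (G : SimpleGraph V) (S T : Finset V) : Prop :=
  ∃ u ∈ S, ∃ v, v ∉ S ∧ G.Adj u v ∧ T = insert v (S.erase u) ∧ IsGPSet G T

/-- `S` is a mobile general position set of `G`: `S` is in general position and
there is a finite sequence of legal moves starting from `S` after which every
vertex of `G` has been occupied at some stage. -/
def IsMobileGPSet {V : Type*} [DecidableEq V] (G : SimpleGraph V) (S : Finset V) : Prop :=
  IsGPSet G S ∧ ∃ (m : ℕ) (f : ℕ → Finset V), f 0 = S ∧
    (∀ i < m, LegalMove G (f i) (f (i + 1))) ∧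
    ∀ v : V, ∃ i ≤ m, v ∈ f i

/-- The mobile general position number of `G`. -/
noncomputable def mob {V : Type*} [DecidableEq V] (G : SimpleGraph V) : ℕ :=
  sSup {n | ∃ S : Finset V, IsMobileGPSet G S ∧ S.card = n}

/-- The general position number of `G`. -/
noncomputable def gpNum {V : Type*} (G : SimpleGraph V) : ℕ :=
  sSup {n | ∃ S : Finset V, IsGPSet G S ∧ S.card = n}

/-!
In `C_n` the distance from `x` to `y` is `min (x - y) (y - x)` computed in `Fin n`: this potential
vanishes only at `y`, changes by at most one along an edge, and can always be decreased by one along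
an edge. Two robots are always in general position, so a pair sweeps the whole cycle by advancing one
robot step by step while the other rests at `0`. Conversely, no three vertices of `C_4` are in
general position, and the only general position sets of `C_6` with more than two vertices are
`{0, 2, 4}` and `{1, 3, 5}`, which admit no legal move: their robots can never reach the other
three vertices.
-/

open SimpleGraph Finset

theorem Fin.val_sub_eq_ite {n : ℕ} (a b : Fin n) :
    (a - b).val = if b ≤ a then a.val - b.val else n + a.val - b.val := by
  split_ifs with h
  · exact Fin.coe_sub_iff_le.mpr h
  · exact Fin.coe_sub_iff_lt.mpr (not_le.mp h)

namespace SimpleGraph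

variable {V : Type*} (G : SimpleGraph V)

variable {G} in
theorem Walk.le_add_length_of_forall_adj {f : V → ℕ} (hf : ∀ u v, G.Adj u v → f u ≤ f v + 1)
    {x y : V} (p : G.Walk x y) : f x ≤ f y + p.length := by
  induction p with
  | nil => simp
  | cons h _ ih => have := hf _ _ h; rw [Walk.length_cons]; omega

theorem exists_walk_length_eq_of_descent {f : V → ℕ} {y : V} (hzero : ∀ x, f x = 0 → x = y)
    (hdesc : ∀ x, f x ≠ 0 → ∃ w, G.Adj x w ∧ f w + 1 = f x) (x : V) :
    ∃ p : G.Walk x y, p.length = f x := by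
  induction hk : f x using Nat.strong_induction_on generalizing x with
  | _ k ih =>
    rcases Nat.eq_zero_or_pos k with rfl | hpos
    · obtain rfl := hzero x hk
      exact ⟨Walk.nil, rfl⟩
    · obtain ⟨w, hadj, hw⟩ := hdesc x (by omega)
      obtain ⟨p, hp⟩ := ih (f w) (by omega) w rfl
      exact ⟨Walk.cons hadj p, by rw [Walk.length_cons, hp]; omega⟩

theorem dist_eq_of_potential {f : V → ℕ} {y : V} (hy : f y = 0) (hzero : ∀ x, f x = 0 → x = y)
    (hlip : ∀ u v, G.Adj u v → f u ≤ f v + 1)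
    (hdesc : ∀ x, f x ≠ 0 → ∃ w, G.Adj x w ∧ f w + 1 = f x) (x : V) :
    G.dist x y = f x := by
  obtain ⟨p, hp⟩ := G.exists_walk_length_eq_of_descent hzero hdesc x
  obtain ⟨q, hq⟩ := p.reachable.exists_walk_length_eq_dist
  have := q.le_add_length_of_forall_adj hlip
  have := G.dist_le p
  omega

theorem cycleGraph_dist {n : ℕ} (x y : Fin n) :
    (cycleGraph n).dist x y = min (x - y).val (y - x).val := by
  have : NeZero n := ⟨x.pos.ne'⟩
  have hy : y.val < n := y.isLt
  refine (cycleGraph n).dist_eq_of_potential (f := fun x => min (x - y).val (y - x).val)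
    (by simp) (fun x hx => ?_) (fun u v h => ?_) (fun x hx => ?_) x
  · have := x.isLt
    rw [Fin.ext_iff]
    simp only [Fin.val_sub_eq_ite, Fin.le_iff_val_le_val] at hx
    split_ifs at hx <;> omega
  · rw [cycleGraph_adj'] at h
    have := u.isLt; have := v.isLt
    simp only [Fin.val_sub_eq_ite, Fin.le_iff_val_le_val] at h ⊢
    split_ifs at h ⊢ <;> omega
  · have hxy : x.val ≠ y.val := fun h => hx (by simp [Fin.ext h])
    have hn : 2 ≤ n := by have := x.isLt; omega
    have hone : (1 : Fin n).val = 1 := by rw [Fin.val_one', Nat.mod_eq_of_lt hn]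
    have := x.isLt
    -- step from `x` towards `y` along the shorter of the two arcs
    obtain ⟨w, hadj, hw⟩ : ∃ w, (cycleGraph n).Adj x w ∧
        ((x - w).val = 1 ∧ (x - y).val ≤ (y - x).val ∨
          (w - x).val = 1 ∧ (y - x).val < (x - y).val) := by
      by_cases hshort : (x - y).val ≤ (y - x).val
      · have hw : (x - (x - 1)).val = 1 := by rw [sub_sub_cancel, hone]
        exact ⟨x - 1, cycleGraph_adj'.mpr (Or.inl hw), Or.inl ⟨hw, hshort⟩⟩
      · have hw : (x + 1 - x).val = 1 := by rw [add_sub_cancel_left, hone]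
        exact ⟨x + 1, cycleGraph_adj'.mpr (Or.inr hw), Or.inr ⟨hw, not_le.mp hshort⟩⟩
    refine ⟨w, hadj, ?_⟩
    have := w.isLt
    simp only [Fin.val_sub_eq_ite, Fin.le_iff_val_le_val] at hw ⊢
    split_ifs at hw ⊢ <;> omega

end SimpleGraph

section GeneralPosition

variable {V : Type*} {G : SimpleGraph V}

variable (G) in
theorem isGPSet_of_card_le_two {S : Finset V} (h : S.card ≤ 2) : IsGPSet G S := by
  classical
  intro x hx y hy z hz hxy hyz hxz
  have : ({x, y, z} : Finset V).card ≤ 2 := (card_le_card (by grind)).trans h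
  simp_all

theorem IsMobileGPSet.exists_legalMove [DecidableEq V] {S : Finset V} (hS : IsMobileGPSet G S)
    {v : V} (hv : v ∉ S) : ∃ T, LegalMove G S T := by
  obtain ⟨-, m, f, hf0, hmove, hcover⟩ := hS
  obtain ⟨i, hi, hvi⟩ := hcover v
  have hi0 : i ≠ 0 := by rintro rfl; exact hv (hf0 ▸ hvi)
  exact ⟨f 1, hf0 ▸ hmove 0 (by omega)⟩

theorem mob_eq_of_forall_card_le [DecidableEq V] {k : ℕ}
    {S₀ : Finset V} (h₀ : IsMobileGPSet G S₀) (hk : S₀.card = k)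
    (hle : ∀ S, IsMobileGPSet G S → S.card ≤ k) : mob G = k :=
  IsGreatest.csSup_eq ⟨⟨S₀, h₀, hk⟩, by rintro _ ⟨S, hS, rfl⟩; exact hle S hS⟩

end GeneralPosition

instance (n : ℕ) : DecidablePred (IsGPSet (cycleGraph n)) := fun S =>
  decidable_of_iff (∀ x ∈ S, ∀ y ∈ S, ∀ z ∈ S, x ≠ y → y ≠ z → x ≠ z →
    min (x - y).val (y - x).val + min (y - z).val (z - y).val ≠ min (x - z).val (z - x).val)
    (by simp only [IsGPSet, cycleGraph_dist])

open Fin.NatCast in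
theorem isMobileGPSet_cycleGraph_pair (n : ℕ) :
    IsMobileGPSet (cycleGraph (n + 2)) {0, 1} := by
  have hval : ∀ i < n + 2, ((i : Fin (n + 2)) : ℕ) = i := fun i hi => Nat.mod_eq_of_lt hi
  refine ⟨isGPSet_of_card_le_two _ card_le_two, n,
    fun i => {0, ((i + 1 : ℕ) : Fin (n + 2))}, by simp, ?_, ?_⟩
  · intro i hi
    have h1 := hval (i + 1) (by omega)
    have h2 := hval (i + 2) (by omega)
    refine ⟨_, mem_insert_of_mem (mem_singleton_self _), ((i + 2 : ℕ) : Fin (n + 2)), ?_, ?_, ?_,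
      isGPSet_of_card_le_two _ card_le_two⟩
    · simp only [mem_insert, mem_singleton, not_or, Fin.ext_iff, h1, h2, Fin.val_zero]
      omega
    · simp only [cycleGraph_adj', Fin.val_sub_eq_ite, Fin.le_iff_val_le_val, h1, h2]
      split_ifs <;> omega
    · have : ((i + 1 : ℕ) : Fin (n + 2)) ≠ 0 := by
        simp only [ne_eq, Fin.ext_iff, h1, Fin.val_zero]; omega
      rw [erase_insert_of_ne this.symm, erase_singleton]
      exact pair_comm _ _
  · intro v
    by_cases hv : v = 0
    · exact ⟨0, Nat.zero_le _, by simp [hv]⟩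
    · refine ⟨v.val - 1, by omega, mem_insert_of_mem (mem_singleton.mpr ?_)⟩
      rw [Fin.ext_iff, hval _ (by omega)]
      have : v.val ≠ 0 := by rwa [Fin.ext_iff] at hv
      omega

theorem card_le_two_of_isGPSet_cycleGraph_four :
    ∀ S : Finset (Fin 4), IsGPSet (cycleGraph 4) S → S.card ≤ 2 := by
  decide

theorem not_isGPSet_univ_cycleGraph_six : ¬ IsGPSet (cycleGraph 6) univ := by
  decide

theorem not_isGPSet_move_cycleGraph_six : ∀ S : Finset (Fin 6), IsGPSet (cycleGraph 6) S →
    2 < S.card → ∀ u ∈ S, ∀ v ∉ S, (cycleGraph 6).Adj u v →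
      ¬ IsGPSet (cycleGraph 6) (insert v (S.erase u)) := by
  decide

theorem card_le_two_of_isMobileGPSet_cycleGraph_six {S : Finset (Fin 6)}
    (hS : IsMobileGPSet (cycleGraph 6) S) : S.card ≤ 2 := by
  by_contra! hcard
  obtain ⟨v, hv⟩ : ∃ v, v ∉ S := by
    by_contra! h
    exact not_isGPSet_univ_cycleGraph_six (eq_univ_of_forall h ▸ hS.1)
  obtain ⟨_, u, hu, w, hw, hadj, rfl, hT⟩ := hS.exists_legalMove hv
  exact not_isGPSet_move_cycleGraph_six S hS.1 hcard u hu w hw hadj hT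

/-- `mob(C₄) = 2` and `mob(C₆) = 2`. -/
theorem stmt3 :
    mob (SimpleGraph.cycleGraph 4) = 2 ∧ mob (SimpleGraph.cycleGraph 6) = 2 :=
  ⟨mob_eq_of_forall_card_le (isMobileGPSet_cycleGraph_pair 2) rfl
      fun S hS => card_le_two_of_isGPSet_cycleGraph_four S hS.1,
    mob_eq_of_forall_card_le (isMobileGPSet_cycleGraph_pair 4) rfl
      fun _ => card_le_two_of_isMobileGPSet_cycleGraph_six⟩
end

section
/- A connected simple graph G with n(G) ≥ 2 vertices satisfies mob(G) = n(G) if and only if G is a complete graph. -/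
open Finset SimpleGraph

section GeneralPosition

variable {V : Type*} {G : SimpleGraph V}

theorem isGPSet_top (S : Finset V) : IsGPSet (⊤ : SimpleGraph V) S := by
  intro x _ y _ z _ hxy hyz hxz
  simp [dist_top_of_ne, hxy, hyz, hxz]

theorem dist_eq_two_of_adj_of_adj {a b c : V} (hab : G.Adj a b) (hbc : G.Adj b c) (hac : a ≠ c)
    (hnac : ¬G.Adj a c) : G.dist a c = 2 :=
  le_antisymm (dist_le (.cons hab (.cons hbc .nil)))
    ((hab.reachable.trans hbc.reachable).one_lt_dist_of_ne_of_not_adj hac hnac)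

theorem IsGPSet.eq_top_of_univ [Fintype V] (hG : G.Connected) (h : IsGPSet G univ) :
    G = ⊤ := by
  ext x y
  refine ⟨Adj.ne, fun hxy => by_contra fun hnxy => ?_⟩
  obtain ⟨p, hp⟩ := hG.exists_walk_length_eq_dist x y
  obtain ⟨a, b, c, hab, hbc, hnac, hac⟩ :=
    p.exists_adj_adj_not_adj_ne hp (hG.one_lt_dist_of_ne_of_not_adj hxy hnxy)
  refine h a (mem_univ a) b (mem_univ b) c (mem_univ c) hab.ne hbc.ne hac ?_
  rw [dist_eq_one_iff_adj.mpr hab, dist_eq_one_iff_adj.mpr hbc,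
    dist_eq_two_of_adj_of_adj hab hbc hac hnac]

end GeneralPosition

section Mobile

variable {V : Type*} [Fintype V] [DecidableEq V] (G : SimpleGraph V)

theorem isMobileGPSet_univ_iff : IsMobileGPSet G univ ↔ IsGPSet G univ :=
  ⟨And.left, fun h => ⟨h, 0, fun _ => univ, rfl, by simp, fun v => ⟨0, le_rfl, mem_univ v⟩⟩⟩

theorem card_mem_upperBounds_mobileGPSet_cards :
    Fintype.card V ∈ upperBounds {n | ∃ S : Finset V, IsMobileGPSet G S ∧ S.card = n} := by
  rintro _ ⟨S, -, rfl⟩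
  exact S.card_le_univ

theorem mob_eq_card_iff : mob G = Fintype.card V ↔ IsMobileGPSet G univ := by
  constructor
  · intro h
    cases isEmpty_or_nonempty V
    · exact (isMobileGPSet_univ_iff G).mpr fun x => isEmptyElim x
    have hne : {n | ∃ S : Finset V, IsMobileGPSet G S ∧ S.card = n}.Nonempty := by
      by_contra hempty
      rw [Set.not_nonempty_iff_eq_empty] at hempty
      rw [mob, hempty, csSup_empty] at h
      exact Fintype.card_ne_zero h.symm
    obtain ⟨S, hS, hcard⟩ := Nat.sSup_mem hne ⟨_, card_mem_upperBounds_mobileGPSet_cards G⟩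
    rwa [← eq_univ_of_card S (hcard.trans h)]
  · intro h
    exact le_antisymm (csSup_le' (card_mem_upperBounds_mobileGPSet_cards G))
      (le_csSup ⟨_, card_mem_upperBounds_mobileGPSet_cards G⟩ ⟨univ, h, card_univ⟩)

end Mobile

theorem stmt6_general {V : Type*} [Fintype V] [DecidableEq V] (G : SimpleGraph V)
    (hG : G.Connected) :
    mob G = Fintype.card V ↔ G = ⊤ := by
  rw [mob_eq_card_iff, isMobileGPSet_univ_iff]
  exact ⟨IsGPSet.eq_top_of_univ hG, fun h => h ▸ isGPSet_top univ⟩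

/-- A connected simple graph `G` with at least 2 vertices satisfies
`mob(G) = n(G)` iff `G` is complete. -/
theorem stmt6 {V : Type*} [Fintype V] [DecidableEq V] (G : SimpleGraph V)
    (hG : G.Connected) (hn : 2 ≤ Fintype.card V) :
    mob G = Fintype.card V ↔ G = ⊤ :=
  stmt6_general G hG
end

section
/- For every integer n ≥ 4, the line graph L(K_n) of the complete graph K_n satisfies mob(L(K_n)) = n − 2. -/
/-!
In `L(K_V)` two distinct vertices, i.e. two edges of `K_V`, are at distance `1` or `2` according
as they meet or not. Hence a set `S` of edges is in general position iff meeting is transitive on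
`S`, i.e. `S` is a vertex-disjoint union of stars and triangles of `K_V`. Every edge of such an `S`
can claim a private vertex of `K_V` (a leaf endpoint, or the apex of its triangle) avoiding any
given set `W` of star centres and uncovered vertices with no two on a common edge, so
`|S| + |W| ≤ |V|`.

Upper bound: if `|S| ≥ |V| - 1`, no two such vertices exist, and then the only legal moves rotate
an isolated cherry (a path with two edges) inside the triangle it spans. That triangle is the
same for all later configurations, so the edges joining it to a fourth vertex are never occupied.

Lower bound: the star at `z` without the edge `zo` has `|V| - 2` edges. Moving its edge `zi` to
`zo` gives the star at `z` without `zi`, from which `zj` can move to `ij`. Since legal moves from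
sets in general position are reversible, every edge gets occupied.
-/

open SimpleGraph Finset Relation

theorem Relation.ReflTransGen.exists_seq {α : Type*} {r : α → α → Prop} {a b : α}
    (h : ReflTransGen r a b) :
    ∃ (m : ℕ) (f : ℕ → α), f 0 = a ∧ f m = b ∧ ∀ k < m, r (f k) (f (k + 1)) := by
  induction h with
  | refl => exact ⟨0, fun _ => a, rfl, rfl, by simp⟩
  | @tail b c _ hbc ih =>
    obtain ⟨m, f, hf0, hfm, hf⟩ := ih
    refine ⟨m + 1, fun k => if k ≤ m then f k else c, by simp [hf0], by simp, fun k hk => ?_⟩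
    rcases Nat.lt_succ_iff_lt_or_eq.mp hk with hk | rfl
    · simpa [hk.le, Nat.succ_le_of_lt hk] using hf k hk
    · simpa [hfm] using hbc

/-- Visit the targets one at a time, passing through `a` in between. -/
theorem Relation.exists_seq_visiting {α ι : Type*} [Finite ι] {r : α → α → Prop} [Std.Symm r]
    {a : α} {p : ι → α → Prop} (h : ∀ i, ∃ b, ReflTransGen r a b ∧ p i b) :
    ∃ (m : ℕ) (f : ℕ → α), f 0 = a ∧ (∀ k < m, r (f k) (f (k + 1))) ∧ ∀ i, ∃ k ≤ m, p i (f k) := by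
  classical
  have := Fintype.ofFinite ι
  suffices ∀ s : Finset ι, ∃ (m : ℕ) (f : ℕ → α), f 0 = a ∧ (∀ k < m, r (f k) (f (k + 1))) ∧
      ReflTransGen r (f m) a ∧ ∀ i ∈ s, ∃ k ≤ m, p i (f k) by
    obtain ⟨m, f, hf0, hf, -, hp⟩ := this univ
    exact ⟨m, f, hf0, hf, fun i => hp i (mem_univ i)⟩
  intro s
  induction s using Finset.induction_on with
  | empty => exact ⟨0, fun _ => a, rfl, by simp, .refl, by simp⟩
  | insert i s _ ih =>
    obtain ⟨m, f, hf0, hf, hfa, hp⟩ := ih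
    obtain ⟨b, hab, hb⟩ := h i
    obtain ⟨k, g, hg0, hgk, hg⟩ := (hfa.trans hab).exists_seq
    have hba : ReflTransGen r b a := (ReflTransGen.stdSymm (r := r)).symm _ _ hab
    refine ⟨m + k, fun j => if j ≤ m then f j else g (j - m), by simp [hf0], fun j hj => ?_,
      ?_, ?_⟩
    · by_cases hjm : j < m
      · simpa [hjm.le, Nat.succ_le_of_lt hjm] using hf j hjm
      · have := hg (j - m) (by omega)
        rcases (not_lt.mp hjm).eq_or_lt with rfl | hjm
        · simpa [hg0] using this
        · simpa [not_le.mpr hjm, show ¬ j + 1 ≤ m by omega,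
            show j + 1 - m = j - m + 1 by omega] using this
    · rcases Nat.eq_zero_or_pos k with rfl | hk
      · simpa [← hgk, hg0] using hfa
      · simpa [show ¬ m + k ≤ m by omega, hgk] using hba
    · intro j hj
      rcases mem_insert.mp hj with rfl | hj
      · refine ⟨m + k, le_rfl, ?_⟩
        rcases Nat.eq_zero_or_pos k with rfl | hk
        · simpa [← hgk, hg0] using hb
        · simpa [show ¬ m + k ≤ m by omega, hgk] using hb
      · obtain ⟨l, hl, hpl⟩ := hp j hj
        exact ⟨l, by omega, by simpa [hl] using hpl⟩

section LegalMove

variable {V : Type*} [DecidableEq V] {G : SimpleGraph V} {S T : Finset V}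

theorem LegalMove.isGPSet (h : LegalMove G S T) : IsGPSet G T := by
  obtain ⟨-, -, -, -, -, -, hT⟩ := h
  exact hT

theorem LegalMove.card_eq (h : LegalMove G S T) : #T = #S := by
  obtain ⟨u, hu, v, hv, -, rfl, -⟩ := h
  rw [card_insert_of_notMem (fun h => hv (mem_of_mem_erase h)), card_erase_add_one hu]

theorem LegalMove.symm (hS : IsGPSet G S) (h : LegalMove G S T) : LegalMove G T S := by
  obtain ⟨u, hu, v, hv, huv, rfl, -⟩ := h
  refine ⟨v, mem_insert_self v _, u, by simp [huv.ne], huv.symm, ?_, hS⟩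
  rw [erase_insert (fun h => hv (mem_of_mem_erase h)), insert_erase hu]

theorem isMobileGPSet_of_forall_reflTransGen [Finite V] (hS : IsGPSet G S)
    (h : ∀ v, ∃ T, ReflTransGen (LegalMove G) S T ∧ v ∈ T) : IsMobileGPSet G S := by
  let r (A B : Finset V) : Prop := IsGPSet G A ∧ LegalMove G A B
  have : Std.Symm r := ⟨fun A B hAB => ⟨hAB.2.isGPSet, hAB.2.symm hAB.1⟩⟩
  have hr {T} (hT : ReflTransGen (LegalMove G) S T) : ReflTransGen r S T ∧ IsGPSet G T := by
    induction hT with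
    | refl => exact ⟨.refl, hS⟩
    | tail _ hBC ih => exact ⟨ih.1.tail ⟨ih.2, hBC⟩, hBC.isGPSet⟩
  obtain ⟨m, f, hf0, hf, hcov⟩ := exists_seq_visiting (r := r) (p := fun v T => v ∈ T)
    fun v => (h v).imp fun T hT => ⟨(hr hT.1).1, hT.2⟩
  exact ⟨hS, m, f, hf0, fun k hk => (hf k hk).2, hcov⟩

end LegalMove

namespace CompleteLineGraph

section Basic

variable {V : Type*} {e f : (⊤ : SimpleGraph V).edgeSet}

abbrev topEdge {a b : V} (h : a ≠ b) : (⊤ : SimpleGraph V).edgeSet := ⟨s(a, b), h⟩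

def Meets (e f : (⊤ : SimpleGraph V).edgeSet) : Prop :=
  ∃ x, x ∈ (e : Sym2 V) ∧ x ∈ (f : Sym2 V)

theorem Meets.symm (h : Meets e f) : Meets f e :=
  let ⟨x, he, hf⟩ := h; ⟨x, hf, he⟩

theorem exists_eq_mk (e : (⊤ : SimpleGraph V).edgeSet) :
    ∃ a b, a ≠ b ∧ (e : Sym2 V) = s(a, b) := by
  obtain ⟨e, he⟩ := e
  induction e using Sym2.ind with
  | _ a b => exact ⟨a, b, he, rfl⟩

theorem meets_refl (e : (⊤ : SimpleGraph V).edgeSet) : Meets e e := by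
  obtain ⟨a, b, -, he⟩ := exists_eq_mk e
  exact ⟨a, by simp [he], by simp [he]⟩

theorem ne_of_coe_eq {a b : V} (h : (e : Sym2 V) = s(a, b)) : a ≠ b := by
  simpa [h] using e.2

theorem eq_or_eq_of_mem {a b y : V} {s : Sym2 V} (hab : a ≠ b) (ha : a ∈ s) (hb : b ∈ s)
    (hy : y ∈ s) : y = a ∨ y = b := by
  rwa [(Sym2.mem_and_mem_iff hab).mp ⟨ha, hb⟩, Sym2.mem_iff] at hy

@[simp] theorem eq_topEdge_iff {a b : V} (h : a ≠ b) :
    e = topEdge h ↔ a ∈ (e : Sym2 V) ∧ b ∈ (e : Sym2 V) := by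
  rw [Sym2.mem_and_mem_iff h, Subtype.ext_iff]

theorem edge_eq_of_mem {a b : V} (hab : a ≠ b) (hae : a ∈ (e : Sym2 V)) (hbe : b ∈ (e : Sym2 V))
    (haf : a ∈ (f : Sym2 V)) (hbf : b ∈ (f : Sym2 V)) : e = f :=
  Subtype.ext <| ((Sym2.mem_and_mem_iff hab).1 ⟨hae, hbe⟩).trans
    ((Sym2.mem_and_mem_iff hab).1 ⟨haf, hbf⟩).symm

theorem edge_eq_of_subset (h : ∀ x ∈ (e : Sym2 V), x ∈ (f : Sym2 V)) : e = f := by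
  obtain ⟨a, b, hab, he⟩ := exists_eq_mk e
  exact edge_eq_of_mem hab (by simp [he]) (by simp [he]) (h a (by simp [he])) (h b (by simp [he]))

theorem lineGraph_top_adj : (⊤ : SimpleGraph V).lineGraph.Adj e f ↔ e ≠ f ∧ Meets e f :=
  lineGraph_adj_iff_exists

theorem dist_eq_one (hef : e ≠ f) (h : Meets e f) : (⊤ : SimpleGraph V).lineGraph.dist e f = 1 :=
  dist_eq_one_iff_adj.mpr (lineGraph_top_adj.mpr ⟨hef, h⟩)

theorem dist_eq_two (h : ¬ Meets e f) : (⊤ : SimpleGraph V).lineGraph.dist e f = 2 := by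
  obtain ⟨a, b, hab, he⟩ := exists_eq_mk e
  obtain ⟨c, d, hcd, hf⟩ := exists_eq_mk f
  have hbc : b ≠ c := by rintro rfl; exact h ⟨b, by simp [he], by simp [hf]⟩
  have hadj₁ : (⊤ : SimpleGraph V).lineGraph.Adj e (topEdge hbc) := by
    refine lineGraph_top_adj.mpr ⟨fun h' => h ⟨c, ?_, by simp [hf]⟩, b, by simp [he], by simp⟩
    simp [h']
  have hadj₂ : (⊤ : SimpleGraph V).lineGraph.Adj (topEdge hbc) f := by
    refine lineGraph_top_adj.mpr ⟨fun h' => h ⟨b, by simp [he], ?_⟩, c, by simp, by simp [hf]⟩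
    simp [← h']
  have hle := dist_le (hadj₁.toWalk.append hadj₂.toWalk)
  have hne0 := (hadj₁.reachable.trans hadj₂.reachable).dist_eq_zero_iff.not.mpr
    fun hef => h (hef ▸ meets_refl e)
  have hne1 := dist_eq_one_iff_adj.not.mpr fun hadj => h (lineGraph_top_adj.mp hadj).2
  simp only [Walk.length_append, Adj.length_toWalk] at hle
  omega

theorem isGPSet_iff {S : Finset (⊤ : SimpleGraph V).edgeSet} :
    IsGPSet (⊤ : SimpleGraph V).lineGraph S ↔
      ∀ e ∈ S, ∀ f ∈ S, ∀ g ∈ S, Meets e f → Meets f g → Meets e g := by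
  refine ⟨fun h e he f hf g hg hef hfg => ?_, fun h e he f hf g hg h₁ h₂ h₃ => ?_⟩
  · rcases eq_or_ne e f with rfl | h₁
    · exact hfg
    rcases eq_or_ne f g with rfl | h₂
    · exact hef
    rcases eq_or_ne e g with rfl | h₃
    · exact meets_refl e
    by_contra heg
    exact h e he f hf g hg h₁ h₂ h₃
      (by rw [dist_eq_one h₁ hef, dist_eq_one h₂ hfg, dist_eq_two heg])
  · have := h e he f hf g hg
    by_cases hef : Meets e f <;> by_cases hfg : Meets f g <;> by_cases heg : Meets e g <;>
      simp_all [dist_eq_one, dist_eq_two]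

theorem _root_.IsGPSet.meets_trans {S : Finset (⊤ : SimpleGraph V).edgeSet}
    {g : (⊤ : SimpleGraph V).edgeSet} (hS : IsGPSet (⊤ : SimpleGraph V).lineGraph S) (he : e ∈ S)
    (hf : f ∈ S) (hg : g ∈ S) (hef : Meets e f) (hfg : Meets f g) : Meets e g :=
  isGPSet_iff.mp hS e he f hf g hg hef hfg

end Basic

section Count

variable {V : Type*} {S : Finset (⊤ : SimpleGraph V).edgeSet} {W : Finset V}
  {e f g : (⊤ : SimpleGraph V).edgeSet} {x y : V}

/-- Also holds, vacuously, for a vertex that no edge of `S` covers. -/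
def IsCenter (S : Finset (⊤ : SimpleGraph V).edgeSet) (w : V) : Prop :=
  ∀ e ∈ S, w ∈ (e : Sym2 V) → ∀ f ∈ S, Meets e f → w ∈ (f : Sym2 V)

def IsPrivate (S : Finset (⊤ : SimpleGraph V).edgeSet) (e : (⊤ : SimpleGraph V).edgeSet)
    (x : V) : Prop :=
  (x ∈ (e : Sym2 V) ∧ ∀ f ∈ S, x ∈ (f : Sym2 V) → f = e) ∨
    (x ∉ (e : Sym2 V) ∧ ∀ y ∈ (e : Sym2 V), ∃ g ∈ S, x ∈ (g : Sym2 V) ∧ y ∈ (g : Sym2 V))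

theorem mem_of_isApex (hS : IsGPSet (⊤ : SimpleGraph V).lineGraph S) (hf : f ∈ S)
    (hxf : x ∉ (f : Sym2 V))
    (hapex : ∀ y ∈ (f : Sym2 V), ∃ g ∈ S, x ∈ (g : Sym2 V) ∧ y ∈ (g : Sym2 V))
    (hg : g ∈ S) (hxg : x ∈ (g : Sym2 V)) (hyg : y ∈ (g : Sym2 V)) (hyx : y ≠ x) :
    y ∈ (f : Sym2 V) := by
  obtain ⟨c, d, -, hfcd⟩ := exists_eq_mk f
  obtain ⟨g', hg', hxg', hcg'⟩ := hapex c (by simp [hfcd])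
  obtain ⟨z, hzg, hzf⟩ := hS.meets_trans hg hg' hf ⟨x, hxg, hxg'⟩ ⟨c, hcg', by simp [hfcd]⟩
  rcases eq_or_eq_of_mem hyx.symm hxg hyg hzg with rfl | rfl
  exacts [absurd hzf hxf, hzf]

theorem isPrivate_subsingleton (hS : IsGPSet (⊤ : SimpleGraph V).lineGraph S) (x : V) :
    {e | e ∈ S ∧ IsPrivate S e x}.Subsingleton := by
  have eq_of_isApex {e f} (he : e ∈ S) (hf : f ∈ S) (hex : IsPrivate S e x)
      (hxf : x ∉ (f : Sym2 V))
      (hapex : ∀ y ∈ (f : Sym2 V), ∃ g ∈ S, x ∈ (g : Sym2 V) ∧ y ∈ (g : Sym2 V)) : e = f := by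
    rcases hex with ⟨hxe, huniq⟩ | ⟨hxe, hapex'⟩
    · refine (edge_eq_of_subset fun y hy => ?_).symm
      obtain ⟨g, hg, hxg, hyg⟩ := hapex y hy
      exact huniq g hg hxg ▸ hyg
    · refine edge_eq_of_subset fun y hy => ?_
      obtain ⟨g, hg, hxg, hyg⟩ := hapex' y hy
      exact mem_of_isApex hS hf hxf hapex hg hxg hyg (by rintro rfl; exact hxe hy)
  rintro e ⟨he, hex⟩ f ⟨hf, hfx | ⟨hxf, hapex⟩⟩
  · rcases hex with ⟨hxe, -⟩ | ⟨hxe, hapex⟩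
    · exact hfx.2 e he hxe
    · exact (eq_of_isApex hf he (.inl hfx) hxe hapex).symm
  · exact eq_of_isApex he hf hex hxf hapex

theorem exists_isPrivate_of_leaf {a b : V} (hW : ∀ w ∈ W, IsCenter S w)
    (hW₂ : ∀ e ∈ S, ∀ w ∈ W, ∀ w' ∈ W, w ∈ (e : Sym2 V) → w' ∈ (e : Sym2 V) → w = w')
    (he : e ∈ S) (hab : a ≠ b) (heab : (e : Sym2 V) = s(a, b))
    (ha : ∀ f ∈ S, a ∈ (f : Sym2 V) → f = e) : ∃ x ∉ W, IsPrivate S e x := by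
  by_cases haW : a ∈ W
  · refine ⟨b, fun hbW => hab (hW₂ e he a haW b hbW (by simp [heab]) (by simp [heab])),
      .inl ⟨by simp [heab], fun f hf hbf => ha f hf ?_⟩⟩
    exact hW a haW e he (by simp [heab]) f hf ⟨b, by simp [heab], hbf⟩
  · exact ⟨a, haW, .inl ⟨by simp [heab], ha⟩⟩

theorem exists_isPrivate (hS : IsGPSet (⊤ : SimpleGraph V).lineGraph S)
    (hW : ∀ w ∈ W, IsCenter S w)
    (hW₂ : ∀ e ∈ S, ∀ w ∈ W, ∀ w' ∈ W, w ∈ (e : Sym2 V) → w' ∈ (e : Sym2 V) → w = w')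
    (he : e ∈ S) : ∃ x ∉ W, IsPrivate S e x := by
  obtain ⟨a, b, hab, heab⟩ := exists_eq_mk e
  by_cases ha : ∀ f ∈ S, a ∈ (f : Sym2 V) → f = e
  · exact exists_isPrivate_of_leaf hW hW₂ he hab heab ha
  by_cases hb : ∀ f ∈ S, b ∈ (f : Sym2 V) → f = e
  · exact exists_isPrivate_of_leaf hW hW₂ he hab.symm (heab.trans Sym2.eq_swap) hb
  push Not at ha hb
  obtain ⟨f, hf, haf, hfe⟩ := ha
  obtain ⟨f', hf', hbf', hfe'⟩ := hb
  obtain ⟨c, hcf, hcf'⟩ := hS.meets_trans hf he hf' ⟨a, haf, by simp [heab]⟩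
    ⟨b, by simp [heab], hbf'⟩
  have hce : c ∉ (e : Sym2 V) := by
    rw [heab, Sym2.mem_iff]
    rintro (rfl | rfl)
    exacts [hfe' (edge_eq_of_mem hab hcf' hbf' (by simp [heab]) (by simp [heab])),
      hfe (edge_eq_of_mem hab haf hcf (by simp [heab]) (by simp [heab]))]
  refine ⟨c, fun hcW => hce (hW c hcW f hf hcf e he ⟨a, haf, by simp [heab]⟩),
    .inr ⟨hce, fun y hy => ?_⟩⟩
  rw [heab, Sym2.mem_iff] at hy
  rcases hy with rfl | rfl
  exacts [⟨f, hf, hcf, haf⟩, ⟨f', hf', hcf', hbf'⟩]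

theorem card_add_card_le [Fintype V] [DecidableEq V]
    (hS : IsGPSet (⊤ : SimpleGraph V).lineGraph S) (hW : ∀ w ∈ W, IsCenter S w)
    (hW₂ : ∀ e ∈ S, ∀ w ∈ W, ∀ w' ∈ W, w ∈ (e : Sym2 V) → w' ∈ (e : Sym2 V) → w = w') :
    #S + #W ≤ Fintype.card V := by
  have : #S ≤ #(univ \ W) := card_le_card_of_forall_subsingleton (IsPrivate S)
    (fun e he => (exists_isPrivate hS hW hW₂ he).imp fun x hx => ⟨by simp [hx.1], hx.2⟩)
    (fun x _ => isPrivate_subsingleton hS x)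
  rw [card_univ_sdiff] at this
  have := card_le_univ W
  omega

theorem exists_meets_of_not_isCenter (hS : IsGPSet (⊤ : SimpleGraph V).lineGraph S) (he : e ∈ S)
    (hxe : x ∈ (e : Sym2 V)) (hx : ¬ IsCenter S x) : ∃ f ∈ S, x ∉ (f : Sym2 V) ∧ Meets f e := by
  simp only [IsCenter, not_forall, exists_prop] at hx
  obtain ⟨g, hg, hxg, f, hf, hgf, hxf⟩ := hx
  exact ⟨f, hf, hxf, hS.meets_trans hf hg he hgf.symm ⟨x, hxg, hxe⟩⟩

theorem not_isCenter_of_card [Fintype V] [DecidableEq V]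
    (hS : IsGPSet (⊤ : SimpleGraph V).lineGraph S) (hcard : Fintype.card V < #S + 2) (he : e ∈ S)
    (hye : y ∈ (e : Sym2 V)) (hy : IsCenter S y) (hxe : x ∉ (e : Sym2 V)) : ¬ IsCenter S x := by
  intro hx
  have hyx : y ≠ x := by rintro rfl; exact hxe hye
  have hdisj : ∀ f ∈ S, y ∈ (f : Sym2 V) → x ∉ (f : Sym2 V) := fun f hf hyf hxf =>
    hxe (hx f hf hxf e he ⟨y, hyf, hye⟩)
  have := card_add_card_le hS (W := {y, x}) (by simp [hy, hx]) <| by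
    simp only [mem_insert, mem_singleton]
    rintro f hf w (rfl | rfl) w' (rfl | rfl) hwf hwf' <;> first
      | rfl | exact absurd hwf' (hdisj f hf hwf) | exact absurd hwf (hdisj f hf hwf')
  rw [card_pair hyx] at this
  omega

end Count

section Cherry

variable {V : Type*} {S T : Finset (⊤ : SimpleGraph V).edgeSet}
  {e f g u v : (⊤ : SimpleGraph V).edgeSet} {c p l x : V}

def IsCherry (S : Finset (⊤ : SimpleGraph V).edgeSet) (u e : (⊤ : SimpleGraph V).edgeSet) :
    Prop :=
  u ∈ S ∧ e ∈ S ∧ u ≠ e ∧ Meets u e ∧ ∀ f ∈ S, f ≠ u → f ≠ e → ¬ Meets f u ∧ ¬ Meets f e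

theorem IsCherry.eq_or_eq_of_meets (h : IsCherry S u e) (hf : f ∈ S)
    (hm : Meets f u ∨ Meets f e) : f = u ∨ f = e := by
  by_contra! hfue
  have := h.2.2.2.2 f hf hfue.1 hfue.2
  tauto

theorem IsCherry.isCenter (h : IsCherry S u e) (hcu : c ∈ (u : Sym2 V))
    (hce : c ∈ (e : Sym2 V)) : IsCenter S c := by
  intro f hf hcf g hg hfg
  have hf' := h.eq_or_eq_of_meets hf (.inl ⟨c, hcf, hcu⟩)
  rcases h.eq_or_eq_of_meets hg (by rcases hf' with rfl | rfl <;> simp [hfg.symm]) with rfl | rfl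
  exacts [hcu, hce]

theorem IsCherry.insert_erase [DecidableEq V] (h : IsCherry S u e) (hv : v ∉ S)
    (hvue : ∀ y ∈ (v : Sym2 V), y ∈ (u : Sym2 V) ∨ y ∈ (e : Sym2 V)) (hve : Meets v e) :
    IsCherry (insert v (S.erase u)) v e := by
  obtain ⟨hu, he, hue, -, hS⟩ := h
  refine ⟨mem_insert_self v _, mem_insert_of_mem (mem_erase.mpr ⟨hue.symm, he⟩),
    fun hve' => hv (hve' ▸ he), hve, fun f hf hfv hfe => ?_⟩
  obtain ⟨hfu, hf⟩ := mem_erase.mp ((mem_insert.mp hf).resolve_left hfv)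
  obtain ⟨hfu', hfe'⟩ := hS f hf hfu hfe
  refine ⟨fun ⟨y, hyf, hyv⟩ => ?_, hfe'⟩
  rcases hvue y hyv with hyu | hye
  exacts [hfu' ⟨y, hyf, hyu⟩, hfe' ⟨y, hyf, hye⟩]

variable [DecidableEq V]

theorem isCenter_or_isCenter (hS : IsGPSet (⊤ : SimpleGraph V).lineGraph S)
    (hT : IsGPSet (⊤ : SimpleGraph V).lineGraph (insert v (S.erase u))) (hu : u ∈ S) (hv : v ∉ S)
    (hpx : p ≠ x) (hlx : l ≠ x) (hu' : (u : Sym2 V) = s(p, l)) (hv' : (v : Sym2 V) = s(p, x)) :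
    IsCenter S p ∨ IsCenter S l := by
  by_contra! h
  obtain ⟨fp, hfp, hpfp, hfpu⟩ := exists_meets_of_not_isCenter hS hu (by simp [hu']) h.1
  obtain ⟨fl, hfl, hlfl, hflu⟩ := exists_meets_of_not_isCenter hS hu (by simp [hu']) h.2
  have hlfp : l ∈ (fp : Sym2 V) := by
    obtain ⟨y, hy, hyu⟩ := hfpu
    rw [hu', Sym2.mem_iff] at hyu
    rcases hyu with rfl | rfl
    exacts [absurd hy hpfp, hy]
  have hpfl : p ∈ (fl : Sym2 V) := by
    obtain ⟨y, hy, hyu⟩ := hflu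
    rw [hu', Sym2.mem_iff] at hyu
    rcases hyu with rfl | rfl
    exacts [hy, absurd hy hlfl]
  have mem_T {f} (hf : f ∈ S) (hfu : f ≠ u) : f ∈ insert v (S.erase u) :=
    mem_insert_of_mem (mem_erase.mpr ⟨hfu, hf⟩)
  obtain ⟨a, hafl, hafp⟩ := hS.meets_trans hfl hu hfp hflu hfpu.symm
  obtain ⟨y, hyv, hyfp⟩ := hT.meets_trans (mem_insert_self v _)
    (mem_T hfl (by rintro rfl; simp [hu'] at hlfl)) (mem_T hfp (by rintro rfl; simp [hu'] at hpfp))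
    ⟨p, by simp [hv'], hpfl⟩ ⟨a, hafl, hafp⟩
  rw [hv', Sym2.mem_iff] at hyv
  rcases hyv with rfl | rfl
  · exact hpfp hyfp
  · obtain rfl : a = y :=
      (eq_or_eq_of_mem hlx hlfp hyfp hafp).resolve_left fun hal => hlfl (hal ▸ hafl)
    exact hv (edge_eq_of_mem (f := v) hpx hpfl hafl (by simp [hv']) (by simp [hv']) ▸ hfl)

theorem exists_edge_of_not_isCenter (hS : IsGPSet (⊤ : SimpleGraph V).lineGraph S)
    (hT : IsGPSet (⊤ : SimpleGraph V).lineGraph (insert v (S.erase u))) (hu : u ∈ S) (hv : v ∉ S)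
    (hpx : p ≠ x) (hlx : l ≠ x) (hu' : (u : Sym2 V) = s(p, l)) (hv' : (v : Sym2 V) = s(p, x))
    (hx : ¬ IsCenter S x) : ∃ g ∈ S, (g : Sym2 V) = s(l, x) := by
  simp only [IsCenter, not_forall, exists_prop] at hx
  obtain ⟨g, hg, hxg, k, hk, hgk, hxk⟩ := hx
  have hgu : g ≠ u := by rintro rfl; simp [hu', hpx.symm, hlx.symm] at hxg
  have hgu' : Meets g u := by
    by_cases hku : k = u
    · exact hku ▸ hgk
    obtain ⟨y, hyv, hyk⟩ := hT.meets_trans (mem_insert_self v _)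
      (mem_insert_of_mem (mem_erase.mpr ⟨hgu, hg⟩)) (mem_insert_of_mem (mem_erase.mpr ⟨hku, hk⟩))
      ⟨x, by simp [hv'], hxg⟩ hgk
    rw [hv', Sym2.mem_iff] at hyv
    rcases hyv with rfl | rfl
    exacts [hS.meets_trans hg hk hu hgk ⟨y, hyk, by simp [hu']⟩, absurd hyk hxk]
  obtain ⟨y, hyg, hyu⟩ := hgu'
  rw [hu', Sym2.mem_iff] at hyu
  rcases hyu with rfl | rfl
  · exact absurd (edge_eq_of_mem (f := v) hpx hyg hxg (by simp [hv']) (by simp [hv']) ▸ hg) hv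
  · exact ⟨g, hg, (Sym2.mem_and_mem_iff hlx).mp ⟨hyg, hxg⟩⟩

theorem isCherry_of_legalMove_of_mem (hS : IsGPSet (⊤ : SimpleGraph V).lineGraph S)
    (hT : IsGPSet (⊤ : SimpleGraph V).lineGraph (insert v (S.erase u))) (hu : u ∈ S) (hv : v ∉ S)
    (hpl : p ≠ l) (hpx : p ≠ x) (hlx : l ≠ x) (hu' : (u : Sym2 V) = s(p, l))
    (hv' : (v : Sym2 V) = s(p, x)) (hg : g ∈ S) (hg' : (g : Sym2 V) = s(l, x)) :
    IsCherry S u g := by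
  have hgu : g ≠ u := by rintro rfl; simp [hu', hpl, hpx] at hg'
  refine ⟨hu, hg, hgu.symm, ⟨l, by simp [hu'], by simp [hg']⟩, fun f hf hfu hfg => ?_⟩
  have hfv : f ≠ v := by rintro rfl; exact hv hf
  have hlf : l ∉ (f : Sym2 V) := by
    intro hlf
    obtain ⟨y, hyv, hyf⟩ := hT.meets_trans (mem_insert_self v _)
      (mem_insert_of_mem (mem_erase.mpr ⟨hgu, hg⟩)) (mem_insert_of_mem (mem_erase.mpr ⟨hfu, hf⟩))
      ⟨x, by simp [hv'], by simp [hg']⟩ ⟨l, by simp [hg'], hlf⟩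
    rw [hv', Sym2.mem_iff] at hyv
    rcases hyv with rfl | rfl
    · exact hfu (edge_eq_of_mem hpl hyf hlf (by simp [hu']) (by simp [hu']))
    · exact hfg (edge_eq_of_mem hlx hlf hyf (by simp [hg']) (by simp [hg']))
  have hpf : p ∉ (f : Sym2 V) := by
    intro hpf
    obtain ⟨y, hyf, hyg⟩ := hS.meets_trans hf hu hg ⟨p, hpf, by simp [hu']⟩
      ⟨l, by simp [hu'], by simp [hg']⟩
    rw [hg', Sym2.mem_iff] at hyg
    rcases hyg with rfl | rfl
    · exact hlf hyf
    · exact hfv (edge_eq_of_mem hpx hpf hyf (by simp [hv']) (by simp [hv']))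
  have hxf : x ∉ (f : Sym2 V) := by
    intro hxf
    obtain ⟨y, hyf, hyu⟩ := hS.meets_trans hf hg hu ⟨x, hxf, by simp [hg']⟩
      ⟨l, by simp [hg'], by simp [hu']⟩
    rw [hu', Sym2.mem_iff] at hyu
    rcases hyu with rfl | rfl
    · exact hfv (edge_eq_of_mem hpx hyf hxf (by simp [hv']) (by simp [hv']))
    · exact hlf hyf
  simp only [Meets, hu', hg', Sym2.mem_iff, not_exists, not_and]
  refine ⟨fun y hy => ?_, fun y hy => ?_⟩ <;> rintro (rfl | rfl) <;> contradiction

variable [Fintype V]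

/-- The last conjunct says that `v` is the third side of the triangle spanned by `u` and `e`. -/
theorem exists_isCherry_of_legalMove (hS : IsGPSet (⊤ : SimpleGraph V).lineGraph S)
    (hcard : Fintype.card V < #S + 2) (hST : LegalMove (⊤ : SimpleGraph V).lineGraph S T) :
    ∃ u v e, IsCherry S u e ∧ IsCherry T v e ∧
      ∀ y, y ∈ (v : Sym2 V) ∨ y ∈ (e : Sym2 V) ↔ y ∈ (u : Sym2 V) ∨ y ∈ (e : Sym2 V) := by
  obtain ⟨u, hu, v, hv, huv, rfl, hT⟩ := hST
  obtain ⟨huv, p, hpu, hpv⟩ := lineGraph_top_adj.mp huv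
  obtain ⟨l, hu'⟩ := Sym2.mem_iff_exists.mp hpu
  obtain ⟨x, hv'⟩ := Sym2.mem_iff_exists.mp hpv
  have hpl := ne_of_coe_eq hu'
  have hpx := ne_of_coe_eq hv'
  have hlx : l ≠ x := by rintro rfl; exact huv (Subtype.ext (hu'.trans hv'.symm))
  have hxu : x ∉ (u : Sym2 V) := by simp [hu', hpx.symm, hlx.symm]
  have hx : ¬ IsCenter S x := by
    rcases isCenter_or_isCenter hS hT hu hv hpx hlx hu' hv' with hc | hc <;>
      exact not_isCenter_of_card hS hcard hu (by simp [hu']) hc hxu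
  obtain ⟨e, he, he'⟩ := exists_edge_of_not_isCenter hS hT hu hv hpx hlx hu' hv' hx
  have hue := isCherry_of_legalMove_of_mem hS hT hu hv hpl hpx hlx hu' hv' he he'
  refine ⟨u, v, e, hue, hue.insert_erase hv (by simp [hu', hv', he'])
    ⟨x, by simp [hv'], by simp [he']⟩, fun y => ?_⟩
  simp only [hu', hv', he', Sym2.mem_iff]
  tauto

theorem IsCherry.eq_or_eq (hS : IsGPSet (⊤ : SimpleGraph V).lineGraph S)
    (hcard : Fintype.card V < #S + 2) {u' e' : (⊤ : SimpleGraph V).edgeSet} (h : IsCherry S u e)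
    (h' : IsCherry S u' e') : (u' = u ∧ e' = e) ∨ (u' = e ∧ e' = u) := by
  obtain ⟨c, hcu, hce⟩ := h.2.2.2.1
  obtain ⟨c', hcu', hce'⟩ := h'.2.2.2.1
  by_cases hm : Meets u' u ∨ Meets u' e
  · have hue' := h'.2.2.1
    rcases h.eq_or_eq_of_meets h'.1 hm with rfl | rfl
    · have := h.eq_or_eq_of_meets h'.2.1 (.inl ⟨c', hce', hcu'⟩)
      tauto
    · have := h.eq_or_eq_of_meets h'.2.1 (.inr ⟨c', hce', hcu'⟩)
      tauto
  · exact absurd (h'.isCenter hcu' hce') <| not_isCenter_of_card hS hcard h.1 hcu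
      (h.isCenter hcu hce) fun hc'u => hm (.inl ⟨c', hcu', hc'u⟩)

theorem IsCherry.exists_of_legalMove (hS : IsGPSet (⊤ : SimpleGraph V).lineGraph S)
    (hcard : Fintype.card V < #S + 2) (h : IsCherry S u e)
    (hST : LegalMove (⊤ : SimpleGraph V).lineGraph S T) :
    ∃ u' e', IsCherry T u' e' ∧
      ∀ y, y ∈ (u' : Sym2 V) ∨ y ∈ (e' : Sym2 V) ↔ y ∈ (u : Sym2 V) ∨ y ∈ (e : Sym2 V) := by
  obtain ⟨u₁, v, e₁, h₁, hT, hve⟩ := exists_isCherry_of_legalMove hS hcard hST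
  refine ⟨v, e₁, hT, fun y => (hve y).trans ?_⟩
  rcases h.eq_or_eq hS hcard h₁ with ⟨rfl, rfl⟩ | ⟨rfl, rfl⟩
  exacts [Iff.rfl, or_comm]

theorem IsCherry.exists_of_legalMoves {m : ℕ} {f : ℕ → Finset (⊤ : SimpleGraph V).edgeSet}
    (hS : IsGPSet (⊤ : SimpleGraph V).lineGraph (f 0)) (hcard : Fintype.card V < #(f 0) + 2)
    (hf : ∀ i < m, LegalMove (⊤ : SimpleGraph V).lineGraph (f i) (f (i + 1)))
    (h : IsCherry (f 0) u e) :
    ∀ i ≤ m, ∃ u' e', IsCherry (f i) u' e' ∧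
      ∀ y, y ∈ (u' : Sym2 V) ∨ y ∈ (e' : Sym2 V) ↔ y ∈ (u : Sym2 V) ∨ y ∈ (e : Sym2 V) := by
  have hgp : ∀ i ≤ m, IsGPSet (⊤ : SimpleGraph V).lineGraph (f i) ∧ #(f i) = #(f 0) := by
    intro i
    induction i with
    | zero => exact fun _ => ⟨hS, rfl⟩
    | succ i ih =>
      exact fun hi => ⟨(hf i hi).isGPSet, (hf i hi).card_eq.trans (ih (by omega)).2⟩
  intro i
  induction i with
  | zero => exact fun _ => ⟨u, e, h, fun _ => Iff.rfl⟩
  | succ i ih =>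
    intro hi
    obtain ⟨u', e', h', hue'⟩ := ih (by omega)
    obtain ⟨hSi, hcardi⟩ := hgp i (by omega)
    obtain ⟨u'', e'', h'', hue''⟩ := h'.exists_of_legalMove hSi (hcardi ▸ hcard) (hf i hi)
    exact ⟨u'', e'', h'', fun y => (hue'' y).trans (hue' y)⟩

theorem exists_notMem_of_isGPSet (hV : 4 ≤ Fintype.card V)
    (hS : IsGPSet (⊤ : SimpleGraph V).lineGraph S) : ∃ e, e ∉ S := by
  obtain ⟨φ⟩ := Function.Embedding.nonempty_of_card_le (α := Fin 4) (β := V) (by simpa using hV)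
  by_contra! h
  obtain ⟨y, hy₁, hy₂⟩ := hS.meets_trans
    (h (topEdge (φ.injective.ne (by decide : (0 : Fin 4) ≠ 1))))
    (h (topEdge (φ.injective.ne (by decide : (1 : Fin 4) ≠ 2))))
    (h (topEdge (φ.injective.ne (by decide : (2 : Fin 4) ≠ 3)))) ⟨φ 1, by simp, by simp⟩
    ⟨φ 2, by simp, by simp⟩
  simp only [Sym2.mem_iff] at hy₁ hy₂
  rcases hy₁ with rfl | rfl <;> rcases hy₂ with h' | h' <;> simp at h'

theorem card_le_of_isMobileGPSet (hV : 4 ≤ Fintype.card V)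
    (hS : IsMobileGPSet (⊤ : SimpleGraph V).lineGraph S) : #S ≤ Fintype.card V - 2 := by
  by_contra! hbig
  have hcard : Fintype.card V < #S + 2 := by omega
  obtain ⟨hgp, m, f, rfl, hf, hcov⟩ := hS
  have hm : 0 < m := by
    obtain ⟨e₀, he₀⟩ := exists_notMem_of_isGPSet hV hgp
    obtain ⟨i, hi, hei⟩ := hcov e₀
    by_contra! hm
    obtain rfl : i = 0 := by omega
    exact he₀ hei
  obtain ⟨u, -, e, hue, -, -⟩ := exists_isCherry_of_legalMove hgp hcard (hf 0 hm)
  obtain ⟨c, hcu, hce⟩ := hue.2.2.2.1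
  obtain ⟨a, hu⟩ := Sym2.mem_iff_exists.mp hcu
  obtain ⟨b, he⟩ := Sym2.mem_iff_exists.mp hce
  obtain ⟨d, -, hd⟩ := exists_mem_notMem_of_card_lt_card (s := {c, a, b}) (t := univ)
    (by rw [card_univ]; have := card_le_three (a := c) (b := a) (c := b); omega)
  simp only [mem_insert, mem_singleton, not_or] at hd
  obtain ⟨hdc, hda, hdb⟩ := hd
  obtain ⟨i, hi, hcd⟩ := hcov (topEdge (Ne.symm hdc))
  obtain ⟨u', e', h, hue'⟩ := hue.exists_of_legalMoves hgp hcard hf i hi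
  have hd : ¬ (d ∈ (u' : Sym2 V) ∨ d ∈ (e' : Sym2 V)) := by
    rw [hue' d, hu, he]
    simp [hdc, hda, hdb]
  rcases h.eq_or_eq_of_meets hcd ((hue' c).mpr (.inl hcu) |>.imp
    (fun hc => ⟨c, by simp, hc⟩) fun hc => ⟨c, by simp, hc⟩) with rfl | rfl <;> simp at hd

end Cherry

section Construction

variable {V : Type*} {S : Finset (⊤ : SimpleGraph V).edgeSet} {z o i j : V}

theorem isGPSet_of_forall_mem_or_mem
    (h₁ : ∀ e ∈ S, z ∈ (e : Sym2 V) ∨ i ∈ (e : Sym2 V))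
    (h₂ : ∀ e ∈ S, ∀ f ∈ S, z ∈ (e : Sym2 V) → i ∈ (f : Sym2 V) → ¬ Meets e f) :
    IsGPSet (⊤ : SimpleGraph V).lineGraph S := by
  refine isGPSet_iff.mpr fun e he f hf g hg hef hfg => ?_
  rcases h₁ e he with hze | hie
  · have hzf := (h₁ f hf).resolve_right fun hif => h₂ e he f hf hze hif hef
    exact ⟨z, hze, (h₁ g hg).resolve_right fun hig => h₂ f hf g hg hzf hig hfg⟩
  · have hif := (h₁ f hf).resolve_left fun hzf => h₂ f hf e he hzf hie hef.symm
    exact ⟨i, hie, (h₁ g hg).resolve_left fun hzg => h₂ g hg f hf hzg hif hfg.symm⟩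

variable [DecidableEq V] [Fintype V]

def starExcept (z o : V) : Finset (⊤ : SimpleGraph V).edgeSet :=
  univ.filter fun e => z ∈ (e : Sym2 V) ∧ o ∉ (e : Sym2 V)

theorem card_starExcept (hzo : z ≠ o) : #(starExcept z o) = Fintype.card V - 2 := by
  rw [← card_pair hzo, ← card_univ_sdiff]
  refine (card_bij (fun k hk => topEdge (a := z) (b := k) (by rintro rfl; simp at hk))
    (fun k hk => ?_) (fun k _ k' _ h => ?_) (fun e he => ?_)).symm
  · simp only [mem_sdiff, mem_univ, mem_insert, mem_singleton, true_and, not_or] at hk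
    simp [starExcept, hzo.symm, Ne.symm hk.2]
  · exact Sym2.congr_right.mp (congrArg Subtype.val h)
  · simp only [starExcept, mem_filter, mem_univ, true_and] at he
    obtain ⟨k, hk⟩ := Sym2.mem_iff_exists.mp he.1
    refine ⟨k, ?_, Subtype.ext hk.symm⟩
    have := ne_of_coe_eq hk
    simp_all [eq_comm]

theorem isGPSet_starExcept : IsGPSet (⊤ : SimpleGraph V).lineGraph (starExcept z o) :=
  isGPSet_of_forall_mem_or_mem (z := z) (i := o) (by simp +contextual [starExcept])
    (by simp +contextual [starExcept])

theorem legalMove_starExcept (hzo : z ≠ o) (hzi : z ≠ i) (hoi : o ≠ i) :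
    LegalMove (⊤ : SimpleGraph V).lineGraph (starExcept z o) (starExcept z i) := by
  refine ⟨topEdge hzi, by simp [starExcept, hzo.symm, hoi], topEdge hzo, by simp [starExcept],
    lineGraph_top_adj.mpr ⟨by simp [hzo.symm, hoi], z, by simp, by simp⟩, ?_, isGPSet_starExcept⟩
  ext e
  simp only [starExcept, mem_insert, mem_erase, ne_eq, mem_filter, mem_univ, true_and,
    eq_topEdge_iff]
  grind [eq_or_eq_of_mem]

theorem legalMove_starExcept_insert (hzi : z ≠ i) (hzj : z ≠ j) (hij : i ≠ j) :
    LegalMove (⊤ : SimpleGraph V).lineGraph (starExcept z i)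
      (insert (topEdge hij) ((starExcept z i).erase (topEdge hzj))) := by
  refine ⟨topEdge hzj, by simp [starExcept, hzi.symm, hij], topEdge hij,
    by simp [starExcept, hzi, hzj], lineGraph_top_adj.mpr ⟨by simp [hzi.symm, hij], j, by simp,
    by simp⟩, rfl, ?_⟩
  apply isGPSet_of_forall_mem_or_mem (z := z) (i := i) <;>
    simp only [starExcept, Meets, mem_insert, mem_erase, ne_eq, mem_filter, mem_univ, true_and,
      eq_topEdge_iff, not_exists, not_and] <;>
    grind [eq_or_eq_of_mem]

theorem exists_reflTransGen_starExcept_mem (hV : 3 ≤ Fintype.card V) (hzo : z ≠ o)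
    (w : (⊤ : SimpleGraph V).edgeSet) :
    ∃ T, ReflTransGen (LegalMove (⊤ : SimpleGraph V).lineGraph) (starExcept z o) T ∧ w ∈ T := by
  have reach {k} (hzk : z ≠ k) :
      ReflTransGen (LegalMove (⊤ : SimpleGraph V).lineGraph) (starExcept z o) (starExcept z k) := by
    rcases eq_or_ne o k with rfl | hok
    exacts [.refl, .single (legalMove_starExcept hzo hzk hok)]
  obtain ⟨a, b, hab, hw⟩ := exists_eq_mk w
  by_cases hz : z ∈ (w : Sym2 V)
  · obtain ⟨k, hk⟩ := Sym2.mem_iff_exists.mp hz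
    obtain ⟨x, -, hx⟩ := exists_mem_notMem_of_card_lt_card (s := {z, k}) (t := univ)
      (by rw [card_univ]; have := card_le_two (a := z) (b := k); omega)
    simp only [mem_insert, mem_singleton, not_or] at hx
    exact ⟨_, reach (Ne.symm hx.1), by simpa [starExcept, hk] using hx⟩
  · have hza : z ≠ a := by rintro rfl; simp [hw] at hz
    have hzb : z ≠ b := by rintro rfl; simp [hw] at hz
    exact ⟨_, (reach hza).tail (legalMove_starExcept_insert hza hzb hab), by simp [hw]⟩

theorem exists_isMobileGPSet (hV : 3 ≤ Fintype.card V) :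
    ∃ S, IsMobileGPSet (⊤ : SimpleGraph V).lineGraph S ∧ #S = Fintype.card V - 2 := by
  obtain ⟨φ⟩ := Function.Embedding.nonempty_of_card_le (α := Fin 2) (β := V) (by simp; omega)
  have hzo : φ 0 ≠ φ 1 := φ.injective.ne (by decide)
  exact ⟨starExcept (φ 0) (φ 1), isMobileGPSet_of_forall_reflTransGen isGPSet_starExcept
    (exists_reflTransGen_starExcept_mem hV hzo), card_starExcept hzo⟩

end Construction

theorem mob_lineGraph_top {V : Type*} [DecidableEq V] [Fintype V] (hV : 4 ≤ Fintype.card V) :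
    mob (⊤ : SimpleGraph V).lineGraph = Fintype.card V - 2 := by
  obtain ⟨S, hS, hcard⟩ := exists_isMobileGPSet (V := V) (by omega)
  exact IsGreatest.csSup_eq
    ⟨⟨S, hS, hcard⟩, by rintro _ ⟨T, hT, rfl⟩; exact card_le_of_isMobileGPSet hV hT⟩

end CompleteLineGraph

/-- For every `n ≥ 4`, the line graph of the complete graph `Kₙ` satisfies
`mob(L(Kₙ)) = n - 2`. -/
theorem stmt16 (n : ℕ) (hn : 4 ≤ n) :
    mob ((⊤ : SimpleGraph (Fin n)).lineGraph) = n - 2 := by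
  simpa using CompleteLineGraph.mob_lineGraph_top (V := Fin n) (by simpa using hn)
end
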